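/- arXiv:1110.4341 — 4 statements merged into one kernel-verified Lean document; each statement's English description precedes it below -/
import Mathlib

section
/- Let G be a finite group, k a field of characteristic p > 0, and let {g_i} be representatives of the conjugacy classes of G. Then the dimension over k of the stable center Z(kG)/Z^pr(kG) equals the number of indices i such that p divides |C_G(g_i)|. -/
open MonoidAlgebra

/-- A witness that the central element `z` of `kG` is "projective", i.e. that
the `kG`-bimodule endomorphism `x ↦ x * z` of `kG` factors through a
projective `kG`-bimodule.  Bimodules over `kG` are modules over
`kG ⊗ kG^op ≅ k[G×G]`, where `kG` itself is a `k[G×G]`-module via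
`(g,h) • x = g * x * h⁻¹`; the maps `σ, π` are `k`-linear and equivariance
for the `k[G×G]`-action is expressed on the group generators `(g,h)`. -/
structure ProjFactorization (k : Type) [Field k] (G : Type) [Group G]
    (z : MonoidAlgebra k G) : Type 1 where
  P : Type
  [acg : AddCommGroup P]
  [modk : Module k P]
  [mod : Module (MonoidAlgebra k (G × G)) P]
  [tower : IsScalarTower k (MonoidAlgebra k (G × G)) P]
  proj : Module.Projective (MonoidAlgebra k (G × G)) P
  σ : MonoidAlgebra k G →ₗ[k] P
  π : P →ₗ[k] MonoidAlgebra k G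
  σ_equivariant : ∀ (g h : G) (x : MonoidAlgebra k G),
    σ (single g (1 : k) * x * single h⁻¹ (1 : k)) = single ((g, h) : G × G) (1 : k) • σ x
  π_equivariant : ∀ (g h : G) (q : P),
    π (single ((g, h) : G × G) (1 : k) • q) = single g (1 : k) * π q * single h⁻¹ (1 : k)
  factors : ∀ x, π (σ x) = x * z

/-- The set `Z^pr(kG)` of central elements of `kG` whose multiplication
endomorphism factors through a projective `kG`-bimodule. -/
def projCenter (k : Type) [Field k] (G : Type) [Group G] : Set (MonoidAlgebra k G) :=
  {z | z ∈ Subalgebra.center k (MonoidAlgebra k G) ∧ Nonempty (ProjFactorization k G z)}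

/-!
By Higman's criterion, `Z^pr(kG)` is the image of the trace `w ↦ ∑ g, g w g⁻¹`. Viewing
`kG`-bimodules as `k[G × G]`-modules, the trace `T w` factors as
`kG → k[G × G] → kG`, `x ↦ (x, 1) · (∑ₜ (t, t)) · (w, 1)`, `(a, b) ↦ a b⁻¹`. Conversely, on a
projective `k[G × G]`-module `P` the identity is a sum of conjugates `∑ᵤ u⁻¹ θ (u ·)` of a
`k`-linear `θ`; transporting this identity through `π ∘ σ` exhibits `z = π (σ 1)` as a trace.

The trace of `g` is `|C_G(g)|` times the class sum of `g`, so in characteristic `p` the image of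
the trace is spanned by the class sums of the classes with `p ∤ |C_G(g)|`, while all class sums
form a basis of `Z(kG)`.
-/

namespace MonoidAlgebra

section Center

variable {k G : Type*} [CommSemiring k] [Group G]

lemma mem_center_iff_forall_single_mul_eq {z : k[G]} :
    z ∈ Subalgebra.center k k[G] ↔ ∀ g : G, single g 1 * z = z * single g 1 := by
  refine ⟨fun hz g => Subalgebra.mem_center_iff.mp hz (single g 1), fun h => ?_⟩
  refine Subalgebra.mem_center_iff.mpr fun b => ?_
  induction b using MonoidAlgebra.induction_linear with
  | zero => simp
  | add f f' hf hf' => rw [add_mul, mul_add, hf, hf']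
  | single a c =>
    rw [show single a c = c • single a (1 : k) by rw [smul_single', mul_one], smul_mul_assoc,
      mul_smul_comm, h]

lemma mem_center_iff_coeff_conj {z : k[G]} :
    z ∈ Subalgebra.center k k[G] ↔ ∀ g x : G, z.coeff (g * x * g⁻¹) = z.coeff x := by
  rw [mem_center_iff_forall_single_mul_eq]
  refine forall_congr' fun g => ⟨fun h x => ?_, fun h => ?_⟩
  · have := congr(($h).coeff (g * x))
    rwa [coeff_single_mul_apply, coeff_mul_single_apply, one_mul, mul_one, inv_mul_cancel_left,
      eq_comm] at this
  · ext y
    rw [coeff_single_mul_apply, coeff_mul_single_apply, one_mul, mul_one, ← h (g⁻¹ * y)]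
    group

end Center

section Trace

variable (k G : Type*) [CommSemiring k] [Group G] [Fintype G]

noncomputable def conjTrace : k[G] →ₗ[k] k[G] :=
  ∑ g : G, LinearMap.mulLeft k (single g 1) ∘ₗ LinearMap.mulRight k (single g⁻¹ 1)

variable {k G}

lemma conjTrace_apply (w : k[G]) :
    conjTrace k G w = ∑ g : G, single g 1 * w * single g⁻¹ 1 := by
  simp [conjTrace, mul_assoc]

lemma conjTrace_single (r : G) (c : k) :
    conjTrace k G (single r c) = ∑ g : G, single (g * r * g⁻¹) c := by
  simp [conjTrace_apply, single_mul_single]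

lemma conjTrace_single_conj (h r : G) (c : k) :
    conjTrace k G (single (h * r * h⁻¹) c) = conjTrace k G (single r c) := by
  simp only [conjTrace_single]
  exact Fintype.sum_bijective (· * h) (Group.mulRight_bijective h) _ _ fun g => by group

lemma single_mul_conjTrace (g : G) (w : k[G]) :
    single g 1 * conjTrace k G w = conjTrace k G w * single g 1 := by
  simp only [conjTrace_apply, Finset.mul_sum, Finset.sum_mul]
  refine Fintype.sum_bijective (g * ·) (Group.mulLeft_bijective g) _ _ fun h => ?_
  have : single h⁻¹ (1 : k) = single (g * h)⁻¹ 1 * single g 1 := by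
    rw [single_mul_single, one_mul, mul_inv_rev, inv_mul_cancel_right]
  have hg : single (g * h) (1 : k) = single g 1 * single h 1 := by rw [single_mul_single, one_mul]
  rw [this, hg]
  simp only [mul_assoc]

lemma conjTrace_mem_center (w : k[G]) : conjTrace k G w ∈ Subalgebra.center k k[G] :=
  mem_center_iff_forall_single_mul_eq.mpr fun g => single_mul_conjTrace g w

lemma sum_single_mul_mul_single_eq_conjTrace (φ : G → k[G]) :
    ∑ u : G × G, single u.1⁻¹ (1 : k) * φ (u.1 * u.2⁻¹) * single u.2 1 =
      conjTrace k G (∑ t : G, φ t * single t⁻¹ 1) := by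
  let e : G × G ≃ G × G :=
    { toFun := fun u => (u.1⁻¹, u.1 * u.2⁻¹)
      invFun := fun v => (v.1⁻¹, (v.1 * v.2)⁻¹)
      left_inv := fun u => by simp
      right_inv := fun v => by simp }
  rw [conjTrace_apply]
  simp only [Finset.mul_sum, Finset.sum_mul]
  rw [← Fintype.sum_prod_type']
  refine Fintype.sum_equiv e _ _ fun u => ?_
  have : single u.2 (1 : k) = single (u.1 * u.2⁻¹)⁻¹ 1 * single u.1⁻¹⁻¹ 1 := by
    rw [single_mul_single, one_mul]; group
  simp only [e, Equiv.coe_fn_mk, this, mul_assoc]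

end Trace

section ClassSum

variable (k : Type*) {G : Type*} [CommSemiring k] [Group G] [Fintype G]

open Classical in
noncomputable def classSum (r : G) : k[G] :=
  ∑ x ∈ Finset.univ.filter (IsConj r), single x 1

variable {k}

lemma coeff_classSum (r x : G) [Decidable (IsConj r x)] :
    (classSum k r).coeff x = if IsConj r x then 1 else 0 := by
  classical
  simp [classSum, coeff_sum, Finsupp.single_apply]

lemma classSum_mem_center (r : G) : classSum k r ∈ Subalgebra.center k k[G] := by
  classical
  refine mem_center_iff_coeff_conj.mpr fun g x => ?_
  have hx : IsConj x (g * x * g⁻¹) := isConj_iff.mpr ⟨g, rfl⟩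
  simp only [coeff_classSum]
  exact if_congr ⟨fun h => h.trans hx.symm, fun h => h.trans hx⟩ rfl rfl

lemma card_filter_conj_eq_card_centralizer [DecidableEq G] {r x : G} (h : IsConj r x) :
    (Finset.univ.filter fun g => g * r * g⁻¹ = x).card =
      Nat.card (Subgroup.centralizer {r}) := by
  obtain ⟨c, rfl⟩ := isConj_iff.mp h
  rw [← Fintype.card_subtype, ← Nat.card_eq_fintype_card]
  refine Nat.card_congr (Equiv.subtypeEquiv (Equiv.mulLeft c⁻¹) fun g => ?_)
  rw [Equiv.coe_mulLeft, Subgroup.mem_centralizer_singleton_iff]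
  constructor <;> intro h
  · calc c⁻¹ * g * r = c⁻¹ * (g * r * g⁻¹) * g := by group
      _ = r * (c⁻¹ * g) := by rw [h]; group
  · calc g * r * g⁻¹ = c * (c⁻¹ * g * r) * g⁻¹ := by group
      _ = c * r * c⁻¹ := by rw [h]; group

lemma conjTrace_single_one (r : G) :
    conjTrace k G (single r 1) = (Nat.card (Subgroup.centralizer {r}) : k) • classSum k r := by
  classical
  ext x
  simp only [conjTrace_single, coeff_sum, Finsupp.finsetSum_apply, coeff_smul_apply,
    coeff_classSum, coeff_single, Finsupp.single_apply]
  split_ifs with h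
  · rw [Finset.sum_boole, card_filter_conj_eq_card_centralizer h, smul_eq_mul, mul_one]
  · rw [smul_zero]
    exact Finset.sum_eq_zero fun g _ => if_neg fun hg => h (isConj_iff.mpr ⟨g, hg⟩)

end ClassSum

section Span

variable {k G : Type*} [Group G] [Fintype G]

lemma linearIndependent_classSum [CommRing k] {S : Set G}
    (hS : S.Pairwise fun r r' => ¬IsConj r r') :
    LinearIndependent k fun r : S => classSum k (r : G) := by
  classical
  refine .of_pairwise_dual_eq_zero_one _ (fun r => (basis G k).coord r) (fun r r' hne => ?_)
    fun r => ?_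
  · change (classSum k (r' : G)).coeff r = 0
    rw [coeff_classSum, if_neg (hS r'.2 r.2 (Subtype.coe_injective.ne hne.symm))]
  · change (classSum k (r : G)).coeff r = 1
    rw [coeff_classSum, if_pos (IsConj.refl _)]

lemma finrank_span_classSum [CommRing k] [Nontrivial k] (S : Finset G)
    (hS : (S : Set G).Pairwise fun r r' => ¬IsConj r r') :
    Module.finrank k (Submodule.span k (classSum k '' (S : Set G))) = S.card := by
  rw [Set.image_eq_range, finrank_span_eq_card (linearIndependent_classSum hS)]
  simp

lemma center_eq_span_classSum [CommSemiring k] (R : Finset G)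
    (hR : ∀ g : G, ∃! r, r ∈ R ∧ IsConj r g) :
    Subalgebra.toSubmodule (Subalgebra.center k k[G]) =
      Submodule.span k (classSum k '' (R : Set G)) := by
  classical
  refine le_antisymm (fun z hz => ?_) (Submodule.span_le.mpr ?_)
  · have hdecomp : z = ∑ r ∈ R, z.coeff r • classSum k r := by
      ext x
      obtain ⟨r₀, ⟨hr₀, hconj⟩, huniq⟩ := hR x
      simp only [coeff_sum, Finsupp.finsetSum_apply, coeff_smul_apply, coeff_classSum,
        smul_eq_mul, mul_ite, mul_one, mul_zero]
      rw [Finset.sum_eq_single_of_mem r₀ hr₀ fun r hr hne => if_neg fun h => hne (huniq r ⟨hr, h⟩),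
        if_pos hconj]
      obtain ⟨c, rfl⟩ := isConj_iff.mp hconj
      exact mem_center_iff_coeff_conj.mp hz c r₀
    rw [hdecomp]
    exact Submodule.sum_mem _ fun r hr =>
      Submodule.smul_mem _ _ (Submodule.subset_span ⟨r, hr, rfl⟩)
  · rintro _ ⟨r, -, rfl⟩
    exact classSum_mem_center r

lemma range_conjTrace_eq_span_classSum [Field k] (p : ℕ) [CharP k p] (R : Finset G)
    (hR : ∀ g : G, ∃! r, r ∈ R ∧ IsConj r g) :
    LinearMap.range (conjTrace k G) = Submodule.span k
      (classSum k '' ↑(R.filter fun r => ¬p ∣ Nat.card (Subgroup.centralizer {r}))) := by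
  refine le_antisymm ?_ (Submodule.span_le.mpr ?_)
  · rw [LinearMap.range_eq_map, ← (basis G k).span_eq, Submodule.map_span, Submodule.span_le]
    rintro _ ⟨_, ⟨g, rfl⟩, rfl⟩
    obtain ⟨r, ⟨hr, hconj⟩, -⟩ := hR g
    obtain ⟨c, rfl⟩ := isConj_iff.mp hconj
    rw [SetLike.mem_coe, basis_apply, conjTrace_single_conj, conjTrace_single_one]
    by_cases hp : p ∣ Nat.card (Subgroup.centralizer {r})
    · rw [(CharP.cast_eq_zero_iff k p _).mpr hp, zero_smul]
      exact Submodule.zero_mem _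
    · exact Submodule.smul_mem _ _ (Submodule.subset_span ⟨r, by simp [hr, hp], rfl⟩)
  · rintro _ ⟨r, hr, rfl⟩
    have hunit : (Nat.card (Subgroup.centralizer {r}) : k) ≠ 0 :=
      fun h => (Finset.mem_filter.mp hr).2 ((CharP.cast_eq_zero_iff k p _).mp h)
    have : classSum k r =
        (Nat.card (Subgroup.centralizer {r}) : k)⁻¹ • conjTrace k G (single r 1) := by
      rw [conjTrace_single_one, inv_smul_smul₀ hunit]
    rw [SetLike.mem_coe, this]
    exact Submodule.smul_mem _ _ (LinearMap.mem_range_self _ _)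

end Span

section Higman

variable {k H P : Type*} [CommRing k] [Group H] [Fintype H]
  [AddCommGroup P] [Module k P] [Module k[H] P] [IsScalarTower k k[H] P]

lemma sum_coeff_inv_smul_single_inv (a : k[H]) :
    ∑ g : H, a.coeff g⁻¹ • single g⁻¹ (1 : k) = a :=
  (Equiv.sum_comp (Equiv.inv H) fun g => a.coeff g • single g (1 : k)).trans
    ((basis H k).sum_repr a)

theorem exists_sumOfConjugates_eq_id_of_projective [Module.Projective k[H] P] :
    ∃ θ : P →ₗ[k] P, θ.sumOfConjugates H = LinearMap.id := by
  obtain ⟨s, hs⟩ := Module.projective_def.mp ‹Module.Projective k[H] P›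
  -- `θ q` is the `k`-combination of the coefficients at `1` of the coordinates `s q` of `q` in a
  -- free module; the conjugates of `θ` pick out the coefficients at every other `u ∈ H`.
  refine ⟨Finsupp.linearCombination k id ∘ₗ Finsupp.mapRange.linearMap ((basis H k).coord 1) ∘ₗ
    s.restrictScalars k, LinearMap.ext fun q => ?_⟩
  have hθ : ∀ g : H, Finsupp.linearCombination k id
      (Finsupp.mapRange ((basis H k).coord 1) (map_zero _) (s (single g (1 : k) • q))) =
        ∑ m ∈ (s q).support, (s q m).coeff g⁻¹ • m := by
    intro g
    rw [map_smul, Finsupp.linearCombination_apply,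
      Finsupp.sum_mapRange_index (h := fun m (c : k) => c • id m) fun _ => zero_smul k _,
      Finsupp.sum_of_support_subset _ Finsupp.support_smul _ fun _ _ => by simp]
    refine Finset.sum_congr rfl fun m _ => ?_
    change (single g 1 * s q m).coeff 1 • m = _
    rw [← mul_inv_cancel g, coeff_single_mul_apply, one_mul, mul_inv_cancel, mul_one]
  simp only [LinearMap.sumOfConjugates_apply, LinearMap.conjugate_apply, LinearMap.comp_apply,
    LinearMap.restrictScalars_apply, Finsupp.mapRange.linearMap_apply, hθ, LinearMap.id_apply]
  calc ∑ g : H, single g⁻¹ (1 : k) • ∑ m ∈ (s q).support, (s q m).coeff g⁻¹ • m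
      = ∑ m ∈ (s q).support, (∑ g : H, (s q m).coeff g⁻¹ • single g⁻¹ (1 : k)) • m := by
        simp only [Finset.smul_sum, Finset.sum_smul, smul_assoc]
        rw [Finset.sum_comm]
        exact Finset.sum_congr rfl fun m _ => Finset.sum_congr rfl fun g _ => smul_comm _ _ _
    _ = q := by
        simp only [sum_coeff_inv_smul_single_inv]
        exact hs q

end Higman

section TraceFactorization

variable (k G : Type*) [CommSemiring k] [Group G]

noncomputable def inlAlgHom : k[G] →ₐ[k] k[G × G] := mapDomainAlgHom k k (MonoidHom.inl G G)

noncomputable def diagonalSum [Fintype G] : k[G × G] := ∑ t : G, single (t, t) 1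

noncomputable def mulInvMap : k[G × G] →ₗ[k] k[G] :=
  mapDomainLinearMap k k fun u : G × G => u.1 * u.2⁻¹

noncomputable def traceSection [Fintype G] (w : k[G]) : k[G] →ₗ[k] k[G × G] :=
  LinearMap.mulRight k (diagonalSum k G * inlAlgHom k G w) ∘ₗ (inlAlgHom k G).toLinearMap

variable {k G}

lemma inlAlgHom_single (g : G) (c : k) : inlAlgHom k G (single g c) = single (g, 1) c := by
  simp [inlAlgHom, mapDomainAlgHom_apply]

lemma mulInvMap_single (a b : G) (c : k) :
    mulInvMap k G (single (a, b) c) = single (a * b⁻¹) c := by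
  simp [mulInvMap]

lemma commute_single_inr_inlAlgHom (h : G) (x : k[G]) :
    Commute (single (1, h) 1) (inlAlgHom k G x) := by
  induction x using MonoidAlgebra.induction_linear with
  | zero => simp
  | add f g hf hg => rw [map_add]; exact hf.add_right hg
  | single a c => simp [inlAlgHom_single, Commute, SemiconjBy, single_mul_single]

lemma single_inl_inv_mul_diagonalSum [Fintype G] (h : G) :
    single (h⁻¹, 1) (1 : k) * diagonalSum k G = single (1, h) 1 * diagonalSum k G := by
  simp only [diagonalSum, Finset.mul_sum, single_mul_single, Prod.mk_mul_mk, one_mul, mul_one]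
  exact Fintype.sum_bijective (h⁻¹ * ·) (Group.mulLeft_bijective h⁻¹) _ _ fun t => by simp

lemma mulInvMap_equivariant (g h : G) (q : k[G × G]) :
    mulInvMap k G (single (g, h) (1 : k) • q) = single g 1 * mulInvMap k G q * single h⁻¹ 1 := by
  rw [smul_eq_mul]
  induction q using MonoidAlgebra.induction_linear with
  | zero => simp
  | add f f' hf hf' => rw [mul_add, map_add, map_add, mul_add, add_mul, hf, hf']
  | single u c =>
    rw [single_mul_single, Prod.mk_mul_mk, mulInvMap_single, mulInvMap_single, single_mul_single,
      single_mul_single, one_mul, mul_one]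
    congr 1
    group

variable [Fintype G]

lemma traceSection_apply (w x : k[G]) :
    traceSection k G w x = inlAlgHom k G x * (diagonalSum k G * inlAlgHom k G w) := rfl

lemma traceSection_equivariant (w : k[G]) (g h : G) (x : k[G]) :
    traceSection k G w (single g 1 * x * single h⁻¹ 1) =
      single (g, h) (1 : k) • traceSection k G w x := by
  have hgh : single (g, h) (1 : k) = single (g, 1) 1 * single (1, h) 1 := by
    rw [single_mul_single]; simp
  have hmove : inlAlgHom k G x * single (h⁻¹, 1) 1 * diagonalSum k G =
      single (1, h) 1 * inlAlgHom k G x * diagonalSum k G := by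
    rw [mul_assoc, single_inl_inv_mul_diagonalSum, ← mul_assoc,
      ← (commute_single_inr_inlAlgHom h x).eq]
  simp only [traceSection_apply, map_mul, inlAlgHom_single, smul_eq_mul, hgh]
  calc single (g, 1) 1 * inlAlgHom k G x * single (h⁻¹, 1) 1 *
        (diagonalSum k G * inlAlgHom k G w)
      = single (g, 1) 1 * (inlAlgHom k G x * single (h⁻¹, 1) 1 * diagonalSum k G) *
          inlAlgHom k G w := by simp only [mul_assoc]
    _ = _ := by rw [hmove]; simp only [mul_assoc]

lemma mulInvMap_traceSection (w x : k[G]) :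
    mulInvMap k G (traceSection k G w x) = x * conjTrace k G w := by
  rw [traceSection_apply]
  induction x using MonoidAlgebra.induction_linear with
  | zero => simp
  | add f f' hf hf' => rw [map_add, add_mul, map_add, add_mul, hf, hf']
  | single u c =>
    induction w using MonoidAlgebra.induction_linear with
    | zero => simp
    | add f f' hf hf' => rw [map_add, map_add, mul_add, mul_add, map_add, mul_add, hf, hf']
    | single a d =>
      simp only [inlAlgHom_single, conjTrace_apply, diagonalSum,
        Finset.mul_sum, Finset.sum_mul, map_sum, single_mul_single, Prod.mk_mul_mk,
        mulInvMap_single, one_mul, mul_one]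
      exact Finset.sum_congr rfl fun t _ => by group

end TraceFactorization

section ProjCenter

variable {k G : Type} [Field k] [Group G] [Fintype G]

noncomputable def traceFactorization (w : k[G]) : ProjFactorization k G (conjTrace k G w) where
  P := k[G × G]
  proj := inferInstance
  σ := traceSection k G w
  π := mulInvMap k G
  σ_equivariant := traceSection_equivariant w
  π_equivariant := mulInvMap_equivariant
  factors := mulInvMap_traceSection w

theorem _root_.ProjFactorization.exists_conjTrace_eq {z : k[G]} (F : ProjFactorization k G z) :
    ∃ w, conjTrace k G w = z := by
  let := F.acg; let := F.modk; let := F.mod; have := F.tower; have := F.proj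
  obtain ⟨θ, hθ⟩ := exists_sumOfConjugates_eq_id_of_projective (k := k) (H := G × G) (P := F.P)
  refine ⟨∑ t : G, F.π (θ (F.σ (single t 1))) * single t⁻¹ 1, ?_⟩
  rw [← sum_single_mul_mul_single_eq_conjTrace]
  calc _ = F.π (θ.sumOfConjugates (G × G) (F.σ 1)) := ?_
    _ = F.π (F.σ 1) := by rw [hθ, LinearMap.id_apply]
    _ = z := by rw [F.factors, one_mul]
  rw [LinearMap.sumOfConjugates_apply, map_sum]
  refine Fintype.sum_congr _ _ fun u => ?_
  have hσ : single u (1 : k) • F.σ 1 = F.σ (single (u.1 * u.2⁻¹) 1) := by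
    rw [← F.σ_equivariant, mul_one, single_mul_single, one_mul]
  rw [LinearMap.conjugate_apply, hσ, show u⁻¹ = (u.1⁻¹, u.2⁻¹) from rfl, F.π_equivariant, inv_inv]

lemma projCenter_eq_range_conjTrace : projCenter k G = LinearMap.range (conjTrace k G) := by
  ext z
  constructor
  · rintro ⟨-, ⟨F⟩⟩
    exact F.exists_conjTrace_eq
  · rintro ⟨w, rfl⟩
    exact ⟨conjTrace_mem_center w, ⟨traceFactorization w⟩⟩

end ProjCenter

end MonoidAlgebra

theorem stmt3_general (k : Type) [Field k] (G : Type) [Group G] [Fintype G]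
    (p : ℕ) [CharP k p]
    (R : Finset G) (hR : ∀ g : G, ∃! r, r ∈ R ∧ IsConj r g) :
    Module.finrank k
      (↥(Subalgebra.toSubmodule (Subalgebra.center k (MonoidAlgebra k G))) ⧸
        (Submodule.span k (projCenter k G)).comap
          (Subalgebra.toSubmodule (Subalgebra.center k (MonoidAlgebra k G))).subtype) =
      (R.filter fun g => p ∣ Nat.card (Subgroup.centralizer {g})).card := by
  have hRpair : (R : Set G).Pairwise fun r r' => ¬IsConj r r' := fun r hr r' hr' hne hconj =>
    hne ((hR r').unique ⟨hr, hconj⟩ ⟨hr', IsConj.refl r'⟩)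
  have hcenter : Module.finrank k (Subalgebra.toSubmodule (Subalgebra.center k k[G])) = R.card := by
    rw [center_eq_span_classSum R hR, finrank_span_classSum R hRpair]
  have hle : LinearMap.range (conjTrace k G) ≤ Subalgebra.toSubmodule (Subalgebra.center k k[G]) :=
    by rintro _ ⟨w, rfl⟩; exact conjTrace_mem_center w
  have hprojCenter : Module.finrank k ((Submodule.span k (projCenter k G)).comap
      (Subalgebra.toSubmodule (Subalgebra.center k k[G])).subtype) =
      (R.filter fun g => ¬p ∣ Nat.card (Subgroup.centralizer {g})).card := by
    rw [projCenter_eq_range_conjTrace, Submodule.span_eq,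
      (Submodule.comapSubtypeEquivOfLe hle).finrank_eq, range_conjTrace_eq_span_classSum p R hR,
      finrank_span_classSum _ (hRpair.mono (Finset.coe_subset.mpr (Finset.filter_subset _ R)))]
  have hsum := Submodule.finrank_quotient_add_finrank ((Submodule.span k (projCenter k G)).comap
    (Subalgebra.toSubmodule (Subalgebra.center k k[G])).subtype)
  rw [hprojCenter, hcenter] at hsum
  have hsplit := Finset.card_filter_add_card_filter_not (s := R)
    fun g => p ∣ Nat.card (Subgroup.centralizer {g})
  omega

/-- Let `G` be a finite group, `k` a field of characteristic
`p > 0`, and `{gᵢ}` representatives of the conjugacy classes of `G`.  Then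
`dim_k (Z(kG)/Z^pr(kG))` equals the number of indices `i` with
`p ∣ |C_G(gᵢ)|`.  (Since `Z^pr(kG)` is a `k`-subspace of the center, taking
the span below does not change the set; the quotient is the stable center.) -/
theorem stmt3 (k : Type) [Field k] (G : Type) [Group G] [Fintype G] [DecidableEq G]
    (p : ℕ) [CharP k p] (hp : p ≠ 0)
    (R : Finset G) (hR : ∀ g : G, ∃! r, r ∈ R ∧ IsConj r g) :
    Module.finrank k
      (↥(Subalgebra.toSubmodule (Subalgebra.center k (MonoidAlgebra k G))) ⧸
        (Submodule.span k (projCenter k G)).comap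
          (Subalgebra.toSubmodule (Subalgebra.center k (MonoidAlgebra k G))).subtype) =
      (R.filter fun g => p ∣ Nat.card (Subgroup.centralizer {g})).card :=
  stmt3_general k G p R hR
end

section
/- Let G be a finite group and k a field of characteristic p > 0. Then the projective ideal Z^pr(kG) of the center of kG equals the image Tr_1^G(kG) of the transfer map x ↦ Σ_{g∈G} gxg⁻¹ from kG to Z(kG). -/
open MonoidAlgebra

/-!
A transfer `Tr x` is projective: it is `π ∘ σ` for the bimodule maps `σ y = ∑ᵤ (y u, u)` into the
free bimodule `k[G × G]` and `π (g, h) = g x h⁻¹`.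

Conversely, Higman's criterion writes the identity of a projective `k[H]`-module as a relative
trace `∑_c c θ c⁻¹` of a `k`-linear `θ`: on a free module take `θ` to be the projection onto the
coefficient of `1`, and transport it along a splitting. Applied with `H = G × G` to a
factorization `(· * z) = π ∘ σ`, this gives `z = π (σ 1) = ∑_{u,v} u · πθσ(u⁻¹v) · v⁻¹`,
which is `Tr (∑_w πθσ(w) w⁻¹)`.
-/

namespace MonoidAlgebra

section Higman

variable {k H : Type*} [CommSemiring k] [Group H]

noncomputable def coeffOneProj : k[H] →ₗ[k] k[H] :=
  lsingle 1 ∘ₗ Finsupp.lapply 1 ∘ₗ (coeffLinearEquiv k).toLinearMap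

theorem single_mul_coeffOneProj_single_inv_mul (a : k[H]) (c : H) :
    single c 1 * coeffOneProj (single c⁻¹ 1 * a) = single c (a.coeff c) := by
  simp [coeffOneProj, single_mul_single]

variable [Fintype H]

theorem sum_single_mul_coeffOneProj_single_inv_mul (a : k[H]) :
    ∑ c : H, single c 1 * coeffOneProj (single c⁻¹ 1 * a) = a := by
  simp only [single_mul_coeffOneProj_single_inv_mul]
  conv_rhs => rw [← sum_coeff_single a]
  exact (Finsupp.sum_fintype _ _ (by simp)).symm

theorem sum_single_smul_mapRange_coeffOneProj {ι : Type*} (v : ι →₀ k[H]) :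
    ∑ c : H, single c (1 : k) • Finsupp.mapRange.linearMap coeffOneProj (single c⁻¹ (1 : k) • v)
      = v := by
  ext i : 1
  simp only [Finsupp.finsetSum_apply, Finsupp.smul_apply, Finsupp.mapRange.linearMap_apply,
    Finsupp.mapRange_apply, smul_eq_mul]
  exact sum_single_mul_coeffOneProj_single_inv_mul (v i)

theorem _root_.Module.Projective.exists_sum_single_smul_eq_self {P : Type*} [AddCommMonoid P]
    [Module k P] [Module k[H] P] [IsScalarTower k k[H] P] (hP : Module.Projective k[H] P) :
    ∃ θ : P →ₗ[k] P, ∀ q : P, ∑ c : H, single c (1 : k) • θ (single c⁻¹ (1 : k) • q) = q := by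
  obtain ⟨s, hs⟩ := Module.projective_def.mp hP
  refine ⟨(Finsupp.linearCombination k[H] id).restrictScalars k ∘ₗ
    Finsupp.mapRange.linearMap coeffOneProj ∘ₗ s.restrictScalars k, fun q => ?_⟩
  conv_rhs => rw [← hs q, ← sum_single_smul_mapRange_coeffOneProj (s q)]
  simp only [map_sum, map_smul, LinearMap.comp_apply, LinearMap.restrictScalars_apply]

end Higman

section Transfer

variable {k G : Type*} [CommSemiring k] [Group G] [Fintype G]

noncomputable def transfer (x : k[G]) : k[G] :=
  ∑ g : G, single g (1 : k) * x * single g⁻¹ (1 : k)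

theorem single_mul_transfer (a : G) (x : k[G]) :
    single a (1 : k) * transfer x = transfer x * single a (1 : k) := by
  simp only [transfer, Finset.mul_sum, Finset.sum_mul]
  refine Fintype.sum_equiv (Equiv.mulLeft a) _ _ fun u => ?_
  rw [Equiv.coe_mulLeft, ← mul_assoc, ← mul_assoc, single_mul_single, mul_assoc _ _ (single a 1),
    single_mul_single, mul_inv_rev, inv_mul_cancel_right, one_mul]

theorem transfer_mem_center (x : k[G]) : transfer x ∈ Subalgebra.center k k[G] := by
  rw [Subalgebra.mem_center_iff]
  intro y
  induction y using MonoidAlgebra.induction_linear with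
  | zero => rw [zero_mul, mul_zero]
  | add y y' hy hy' => rw [add_mul, mul_add, hy, hy']
  | single a c =>
    rw [← mul_one c, ← smul_single', smul_mul_assoc, mul_smul_comm, single_mul_transfer]

theorem sum_sum_single_mul_mul_single_inv (f : G → k[G]) :
    ∑ u : G, ∑ v : G, single u (1 : k) * f (u⁻¹ * v) * single v⁻¹ (1 : k)
      = transfer (∑ w : G, f w * single w⁻¹ (1 : k)) := by
  simp only [transfer, Finset.mul_sum, Finset.sum_mul]
  refine Finset.sum_congr rfl fun u _ => Fintype.sum_equiv (Equiv.mulLeft u⁻¹) _ _ fun v => ?_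
  simp only [Equiv.coe_mulLeft, mul_assoc, single_mul_single, mul_inv_rev, inv_inv,
    mul_inv_cancel, mul_one]

end Transfer

section Bimodule

variable {k G : Type*} [CommSemiring k] [Group G]

noncomputable def bimoduleRep : Representation k (G × G) k[G] where
  toFun gh := LinearMap.mulLeft k (of k G gh.1) ∘ₗ LinearMap.mulRight k (of k G gh.2⁻¹)
  map_one' := by ext; simp
  map_mul' _ _ := LinearMap.ext fun _ => by
    simp only [Module.End.mul_apply, LinearMap.comp_apply, LinearMap.mulLeft_apply,
      LinearMap.mulRight_apply, Prod.fst_mul, Prod.snd_mul, mul_inv_rev, map_mul, mul_assoc]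

theorem bimoduleRep_apply (g h : G) (x : k[G]) :
    bimoduleRep ((g, h) : G × G) x = single g (1 : k) * x * single h⁻¹ (1 : k) := by
  simp [bimoduleRep, mul_assoc]

noncomputable def bimoduleAct (x : k[G]) : k[G × G] →ₗ[k] k[G] :=
  LinearMap.applyₗ x ∘ₗ (bimoduleRep (k := k)).asAlgebraHom.toLinearMap

theorem bimoduleAct_single (x : k[G]) (g h : G) (c : k) :
    bimoduleAct x (single ((g, h) : G × G) c)
      = c • (single g (1 : k) * x * single h⁻¹ (1 : k)) := by
  simp [bimoduleAct, bimoduleRep_apply]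

theorem bimoduleAct_single_smul (x : k[G]) (g h : G) (q : k[G × G]) :
    bimoduleAct x (single ((g, h) : G × G) (1 : k) • q)
      = single g (1 : k) * bimoduleAct x q * single h⁻¹ (1 : k) := by
  simp [bimoduleAct, bimoduleRep_apply]

variable [Fintype G]

/-- `y ↦ (y, 1) · ∑ᵤ (u, u)` -/
noncomputable def mulDiag : k[G] →ₗ[k] k[G × G] :=
  ∑ u : G, mapDomainLinearMap k k fun a => ((a * u, u) : G × G)

theorem mulDiag_single (a : G) (c : k) :
    mulDiag (single a c) = ∑ u : G, single ((a * u, u) : G × G) c := by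
  simp [mulDiag]

theorem mulDiag_single_mul_mul_single_inv (g h : G) (y : k[G]) :
    mulDiag (single g (1 : k) * y * single h⁻¹ (1 : k))
      = single ((g, h) : G × G) (1 : k) • mulDiag y := by
  induction y using MonoidAlgebra.induction_linear with
  | zero => simp
  | add y y' hy hy' => rw [mul_add, add_mul, map_add, hy, hy', map_add, smul_add]
  | single a c =>
    rw [single_mul_single, single_mul_single, one_mul, mul_one, mulDiag_single, mulDiag_single,
      Finset.smul_sum]
    refine Fintype.sum_equiv (Equiv.mulLeft h⁻¹) _ _ fun u => ?_
    simp [single_mul_single, mul_assoc]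

theorem bimoduleAct_mulDiag (x y : k[G]) : bimoduleAct x (mulDiag y) = y * transfer x := by
  induction y using MonoidAlgebra.induction_linear with
  | zero => simp
  | add y y' hy hy' => rw [map_add, map_add, hy, hy', add_mul]
  | single a c =>
    rw [mulDiag_single, map_sum, transfer, Finset.mul_sum]
    refine Finset.sum_congr rfl fun u _ => ?_
    rw [bimoduleAct_single, ← mul_one c, ← smul_single', smul_mul_assoc, mul_one]
    simp only [← mul_assoc, single_mul_single, mul_one]

end Bimodule
end MonoidAlgebra

namespace ProjFactorization

variable {k G : Type} [Field k] [Group G] {z : k[G]}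

attribute [local instance] acg modk mod tower

theorem exists_transfer_eq [Fintype G] (F : ProjFactorization k G z) : ∃ x, transfer x = z := by
  obtain ⟨θ, hθ⟩ := F.proj.exists_sum_single_smul_eq_self
  refine ⟨∑ w : G, F.π (θ (F.σ (single w 1))) * single w⁻¹ 1, Eq.symm ?_⟩
  have hσ (u v : G) : single ((u, v) : G × G)⁻¹ (1 : k) • F.σ 1 = F.σ (single (u⁻¹ * v) 1) := by
    rw [Prod.inv_mk, ← F.σ_equivariant, inv_inv, mul_one, single_mul_single, one_mul]
  rw [← sum_sum_single_mul_mul_single_inv]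
  calc z = F.π (F.σ 1) := by rw [F.factors, one_mul]
    _ = ∑ c : G × G, F.π (single c (1 : k) • θ (single c⁻¹ (1 : k) • F.σ 1)) := by
      rw [← map_sum, hθ]
    _ = _ := by simp only [Fintype.sum_prod_type, hσ, F.π_equivariant]

end ProjFactorization

noncomputable def transferFactorization {k G : Type} [Field k] [Group G] [Fintype G] (x : k[G]) :
    ProjFactorization k G (transfer x) where
  P := k[G × G]
  proj := inferInstance
  σ := mulDiag
  π := bimoduleAct x
  σ_equivariant := mulDiag_single_mul_mul_single_inv
  π_equivariant := bimoduleAct_single_smul x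
  factors := bimoduleAct_mulDiag x

theorem stmt4_general (k : Type) [Field k] (G : Type) [Group G] [Fintype G] :
    projCenter k G =
      Set.range (fun x : MonoidAlgebra k G =>
        ∑ g : G, single g (1 : k) * x * single g⁻¹ (1 : k)) := by
  ext z
  constructor
  · rintro ⟨-, ⟨F⟩⟩
    exact F.exists_transfer_eq
  · rintro ⟨x, rfl⟩
    exact ⟨transfer_mem_center x, ⟨transferFactorization x⟩⟩

/-- For a finite group `G` and a field `k` of characteristic
`p > 0`, the projective ideal `Z^pr(kG)` equals the image of the transfer
map `Tr₁^G : kG → Z(kG)`, `x ↦ ∑_{g ∈ G} g * x * g⁻¹`. -/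
theorem stmt4 (k : Type) [Field k] (G : Type) [Group G] [Fintype G]
    (p : ℕ) [CharP k p] (hp : p ≠ 0) :
    projCenter k G =
      Set.range (fun x : MonoidAlgebra k G =>
        ∑ g : G, single g (1 : k) * x * single g⁻¹ (1 : k)) :=
  stmt4_general k G
end

section
/- Let P be a nontrivial abelian p-group and E a p'-subgroup of Aut(P) acting semiregularly on P \ {1} (i.e., only the identity automorphism in E fixes a nontrivial element of P). Let G = E ⋉ P. Then for g ∈ G: if g ∈ P and g ≠ 1, then C_G(g) = P; and if g ∉ P, then C_G(g) ∩ P = 1. -/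
/-- Let `P` be a nontrivial abelian `p`-group and `E` a
`p'`-subgroup of `Aut(P)` acting semiregularly on `P \ {1}`.  Let
`G = E ⋉ P` (realised as the semidirect product `P ⋊ E` for the natural
action of `E ≤ Aut(P)` on `P`, with `P` embedded via `inl`).  Then for
`g ∈ G`: if `g ∈ P` and `g ≠ 1` then `C_G(g) = P`, and if `g ∉ P` then
`C_G(g) ∩ P = 1`. -/
theorem stmt11 (p : ℕ) [Fact p.Prime] (P : Type*) [CommGroup P] [Finite P]
    [Nontrivial P] (hP : IsPGroup p P)
    (E : Subgroup (MulAut P)) (hE : (Nat.card E).Coprime p)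
    (hsemi : ∀ e : E, e ≠ 1 → ∀ x : P, x ≠ 1 → (e : MulAut P) x ≠ x) :
    ∀ g : P ⋊[E.subtype] E,
      ((g ∈ (SemidirectProduct.inl : P →* P ⋊[E.subtype] E).range ∧ g ≠ 1) →
        Subgroup.centralizer {g} =
          (SemidirectProduct.inl : P →* P ⋊[E.subtype] E).range) ∧
      (g ∉ (SemidirectProduct.inl : P →* P ⋊[E.subtype] E).range →
        Subgroup.centralizer {g} ⊓
          (SemidirectProduct.inl : P →* P ⋊[E.subtype] E).range = ⊥) := by
  intro g
  constructor
  · rintro ⟨⟨x, rfl⟩, hne⟩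
    have hx : x ≠ 1 := fun h => hne (by simp [h])
    ext h
    simp only [Subgroup.mem_centralizer_iff, Set.mem_singleton_iff, forall_eq]
    constructor
    · intro hc
      rw [SemidirectProduct.range_inl_eq_ker_rightHom, MonoidHom.mem_ker]
      have h1 : (SemidirectProduct.inl x * h).left = (h * SemidirectProduct.inl x).left := by
        rw [hc]
      simp only [SemidirectProduct.mul_left, SemidirectProduct.left_inl,
        SemidirectProduct.right_inl, map_one, MulAut.one_apply] at h1
      have hfix : (h.right : MulAut P) x = x := by
        have : x * h.left = h.left * (E.subtype h.right) x := h1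
        rw [mul_comm] at this
        exact (mul_left_cancel this.symm)
      by_contra hr
      exact hsemi h.right hr x hx hfix
    · rintro ⟨y, rfl⟩
      have : (SemidirectProduct.inl (x * y) : P ⋊[E.subtype] E)
          = SemidirectProduct.inl (y * x) := by rw [mul_comm]
      simpa [map_mul] using this
  · intro hg
    have hr : g.right ≠ 1 := by
      intro h1
      exact hg (by rw [SemidirectProduct.range_inl_eq_ker_rightHom]; exact h1)
    rw [eq_bot_iff]
    rintro h ⟨hc, y, rfl⟩
    have hc' := hc g (Set.mem_singleton g)
    have h1 : (g * SemidirectProduct.inl y).left = (SemidirectProduct.inl y * g).left := by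
      rw [hc']
    simp only [SemidirectProduct.mul_left, SemidirectProduct.left_inl,
      SemidirectProduct.right_inl, map_one, MulAut.one_apply] at h1
    have hfix : (g.right : MulAut P) y = y := by
      have : g.left * (E.subtype g.right) y = y * g.left := h1
      rw [mul_comm (y : P) g.left] at this
      exact mul_left_cancel this
    have : y = 1 := by
      by_contra hy
      exact hsemi g.right hr y hy hfix
    simp [this, Subgroup.mem_bot]
end

section
/- Let n be odd, k a field of characteristic 2, G = D_{2n} the dihedral group of order 2n, and τ = Σ_{i=0}^{n-1} aⁱ ∈ kG where a is the rotation of order n. Then (τb)² = τ in kG, and τ ≡ 1 modulo the ideal Tr_1^G(kG) of Z(kG). -/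
open DihedralGroup MonoidAlgebra

/-!
Since `n` is odd and `2 = 0` in `k`, multiplication by `n` is the identity on `kG`.
Writing `τ = Σᵢ aⁱ`, the product `τ b` is the sum `σ` of all `n` reflections, and
`σ² = Σᵢ Σⱼ a^(j - i) = n τ = τ`.
For the second claim take `x = Σᵢ i aⁱ` with `i ∈ {0, …, n - 1}`: the `n` rotations fix `aⁱ` and
the `n` reflections send it to `a⁻ⁱ`, so `Tr₁^G(x) = n Σᵢ (i + (n - i)) aⁱ`, summed over `i ≠ 0`,
which is `τ - 1`.
-/

theorem ZMod.sum_range_natCast {n : ℕ} [NeZero n] {M : Type*} [AddCommMonoid M]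
    (f : ZMod n → M) : ∑ i ∈ Finset.range n, f i = ∑ i, f i := by
  refine Finset.sum_nbij' (↑) ZMod.val (fun _ _ ↦ Finset.mem_univ _)
    (fun i _ ↦ Finset.mem_range.mpr i.val_lt) (fun a ha ↦ ?_) (fun i _ ↦ ZMod.natCast_zmod_val i)
    (fun _ _ ↦ rfl)
  exact ZMod.val_cast_of_lt (Finset.mem_range.mp ha)

theorem ZMod.natCast_val_add_val_neg {R : Type*} [Semiring R] {n : ℕ} [NeZero n] (i : ZMod n) :
    (i.val : R) + (-i).val = if i = 0 then 0 else (n : R) := by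
  rw [ZMod.neg_val]
  split_ifs with hi
  · simp [hi]
  · rw [← Nat.cast_add, Nat.add_sub_cancel' i.val_lt.le]

namespace MonoidAlgebra

variable {k G : Type*} [Semiring k] [Group G] [Fintype G]

/-- The relative trace `Tr₁^G`. -/
noncomputable def conjSum (x : MonoidAlgebra k G) : MonoidAlgebra k G :=
  ∑ g, single g 1 * x * single g⁻¹ 1

theorem conjSum_single (h : G) (c : k) : conjSum (single h c) = ∑ g, single (g * h * g⁻¹) c := by
  simp only [conjSum, single_mul_single, one_mul, mul_one]

theorem conjSum_sum {ι : Type*} (s : Finset ι) (f : ι → MonoidAlgebra k G) :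
    conjSum (∑ i ∈ s, f i) = ∑ i ∈ s, conjSum (f i) := by
  simp only [conjSum, Finset.mul_sum, Finset.sum_mul]
  exact Finset.sum_comm

end MonoidAlgebra

namespace DihedralGroup

variable {n : ℕ}

theorem r_mul_r_mul_r_inv (i j : ZMod n) : r j * r i * (r j)⁻¹ = r i := by
  rw [inv_r, r_mul_r, r_mul_r, add_neg_cancel_comm]

theorem sr_mul_r_mul_sr_inv (i j : ZMod n) : sr j * r i * (sr j)⁻¹ = r (-i) := by
  rw [inv_sr, sr_mul_r, sr_mul_sr, sub_add_cancel_left]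

variable [NeZero n]

theorem sum_univ {M : Type*} [AddCommMonoid M] (f : DihedralGroup n → M) :
    ∑ g, f g = ∑ i, f (r i) + ∑ i, f (sr i) := by
  rw [← equivSum.symm.sum_comp, Fintype.sum_sum_type]
  rfl

variable {k : Type*} [Semiring k]

theorem sum_single_r_mul_single_sr_zero :
    (∑ i : ZMod n, single (r i) (1 : k)) * single (sr 0) 1 = ∑ i : ZMod n, single (sr i) 1 := by
  simp only [Finset.sum_mul, single_mul_single, r_mul_sr, zero_sub, mul_one]
  exact Equiv.sum_comp (Equiv.neg (ZMod n)) fun i ↦ single (sr i) (1 : k)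

theorem sum_single_sr_mul_self :
    (∑ i : ZMod n, single (sr i) (1 : k)) * ∑ i : ZMod n, single (sr i) 1 =
      n • ∑ i : ZMod n, single (r i) 1 := by
  simp only [Finset.sum_mul_sum, single_mul_single, sr_mul_sr, mul_one]
  calc ∑ i : ZMod n, ∑ j : ZMod n, single (r (j - i)) (1 : k)
      = ∑ _i : ZMod n, ∑ j : ZMod n, single (r j) (1 : k) :=
        Fintype.sum_congr _ _ fun i ↦ Equiv.sum_comp (Equiv.subRight i) fun j ↦ single (r j) 1
    _ = n • ∑ i : ZMod n, single (r i) 1 := by rw [Finset.sum_const, Finset.card_univ, ZMod.card]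

theorem conjSum_sum_single_r (v : ZMod n → k) :
    conjSum (∑ i, single (r i) (v i)) = n • ∑ i, single (r i) (v i + v (-i)) := by
  simp only [conjSum_sum, conjSum_single, sum_univ, r_mul_r_mul_r_inv, sr_mul_r_mul_sr_inv,
    Finset.sum_const, Finset.card_univ, ZMod.card, ← smul_add, ← Finset.smul_sum,
    Finset.sum_add_distrib, single_add]
  congr 2
  exact Fintype.sum_equiv (Equiv.neg _) _ _ fun i ↦ by rw [Equiv.neg_apply, neg_neg]

end DihedralGroup

/-- Let `n` be odd, `k` a field of characteristic 2,
`G = D_{2n}` the dihedral group of order `2n`, and `τ = ∑_{i=0}^{n-1} aⁱ` in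
`kG`, where `a = r 1` is the rotation of order `n`.  Then `(τ·b)² = τ` in
`kG` (with `b = sr 0`), and `τ ≡ 1` modulo the ideal `Tr₁^G(kG)` of `Z(kG)`,
i.e. `τ - 1` lies in the image of the transfer `x ↦ ∑_{g ∈ G} g x g⁻¹`. -/
theorem stmt14 (n : ℕ) (hn : Odd n) [NeZero n] (k : Type*) [Field k] [CharP k 2]
    (τ : MonoidAlgebra k (DihedralGroup n))
    (hτ : τ = ∑ i ∈ Finset.range n, single (r (i : ZMod n)) (1 : k)) :
    (τ * single (sr 0) (1 : k)) * (τ * single (sr 0) (1 : k)) = τ ∧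
    ∃ x : MonoidAlgebra k (DihedralGroup n),
      τ - 1 = ∑ g : DihedralGroup n, single g (1 : k) * x * single g⁻¹ (1 : k) := by
  have hn1 : (n : k) = 1 := natCast_eq_one_of_odd_of_two_eq_zero hn CharTwo.two_eq_zero
  have nsmul_eq_self (y : MonoidAlgebra k (DihedralGroup n)) : n • y = y := by
    rw [← Nat.cast_smul_eq_nsmul k, hn1, one_smul]
  rw [ZMod.sum_range_natCast (fun i ↦ single (r i) (1 : k))] at hτ
  subst hτ
  refine ⟨?_, ∑ i : ZMod n, single (r i) (i.val : k), ?_⟩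
  · rw [sum_single_r_mul_single_sr_zero, sum_single_sr_mul_self, nsmul_eq_self]
  · change _ = conjSum _
    simp only [conjSum_sum_single_r, nsmul_eq_self, ZMod.natCast_val_add_val_neg, hn1]
    have single_ite (i : ZMod n) :
        single (r i) (if i = 0 then 0 else 1 : k) = single (r i) 1 - if i = 0 then 1 else 0 := by
      split_ifs with hi <;> simp [hi, MonoidAlgebra.one_def]
    simp only [single_ite, Finset.sum_sub_distrib, Finset.sum_ite_eq', Finset.mem_univ, if_true]
end
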